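/- Unzipping is total: for every Linear A expression e well-typed in environments Γ; Γ̇, the unzipping transformation produces a result, i.e., there exist a context E of non-linear let bindings, a non-linear expression e′, and a linear residual expression ė′ with (E; e′; ė′) = U(e). -/

import Mathlib

/-!
A deep embedding of Linear A / Linear B from
"You Only Linearize Once: Tangents Transpose to Gradients".

* n-ary tuple types are modeled as nested binary pairs;
* variables and function names are natural numbers;
* the linear type system `HasTy` demands every non-linear variable be used
  at least once and every linear variable exactly once (up to `dup`/`drop`);
* `Eval P ρ dρ e os ls w` is call-by-value big-step evaluation over exact
  real arithmetic, returning the non-linear results `os`, the linear results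
  `ls`, and the work `w` under the paper's cost model;
* `Transp` is the transposition transformation 𝒯 (Fig. 3),
  `Unzip` is the unzipping transformation 𝒰 (Fig. 4), and
  `Jvp` is forward-mode differentiation 𝒥 (Fig. 5).
-/

namespace LinearA

abbrev Var := ℕ

/-- Types of Linear A: real scalars and (binary, nestable) tuples. -/
inductive Ty : Type
  | real : Ty
  | pair : Ty → Ty → Ty
deriving DecidableEq

/-- The number of real scalars in a type. -/
def Ty.scalars : Ty → ℕ
  | .real => 1
  | .pair a b => a.scalars + b.scalars

inductive Prim1 : Type | sin | cos | exp
deriving DecidableEq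

inductive Prim2 : Type | add | mul
deriving DecidableEq

/-- Expressions of Linear A.  Binders carry their types.  In `ret`, `lete`,
`app` the first list is the non-linear one and the second the linear one. -/
inductive Expr : Type
  | ret (vs : List Var) (dvs : List Var)                                -- multi-value return (vs; dvs)
  | lete (bs : List (Var × Ty)) (dbs : List (Var × Ty)) (e₁ e₂ : Expr)  -- multi-value let
  | unpack (b₁ b₂ : Var × Ty) (v : Var) (e : Expr)                      -- non-linear tuple unpacking let
  | linUnpack (b₁ b₂ : Var × Ty) (dv : Var) (e : Expr)                  -- linear tuple unpacking let
  | app (f : ℕ) (vs : List Var) (dvs : List Var)                        -- function application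
  | var (v : Var)                                                       -- non-linear variable
  | lit (r : ℝ)                                                         -- real literal
  | tup (v₁ v₂ : Var)                                                   -- non-linear tuple constructor
  | prim1 (op : Prim1) (v : Var)                                        -- unary non-linear primitive
  | prim2 (op : Prim2) (v₁ v₂ : Var)                                    -- binary non-linear primitive
  | linVar (dv : Var)                                                   -- linear variable
  | linZero (τ : Ty)                                                    -- linear zero
  | linTup (dv₁ dv₂ : Var)                                              -- linear tuple constructor
  | linAdd (dv₁ dv₂ : Var)                                              -- linear addition
  | scale (v : Var) (dv : Var)                                          -- right-linear multiplication v * dv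
  | dup (dv : Var)                                                      -- explicit linear fan-out
  | drop (e : Expr)                                                     -- explicit drop

/-- A (top-level, non-recursive) function definition. -/
structure FDef : Type where
  params : List (Var × Ty)        -- non-linear formal parameters
  linParams : List (Var × Ty)     -- linear formal parameters
  retTys : List Ty                -- non-linear result types
  linRetTys : List Ty             -- linear result types
  body : Expr

/-- A program is a list of function definitions; names are list indices. -/
abbrev Program := List FDef

/-- Size of an expression: one unit per grammar node, counting variable
references. -/
def Expr.size : Expr → ℕ
  | .ret vs dvs => 1 + vs.length + dvs.length
  | .lete bs dbs e₁ e₂ => 1 + bs.length + dbs.length + e₁.size + e₂.size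
  | .unpack _ _ _ e => 4 + e.size
  | .linUnpack _ _ _ e => 4 + e.size
  | .app _ vs dvs => 1 + vs.length + dvs.length
  | .var _ => 1
  | .lit _ => 1
  | .tup _ _ => 3
  | .prim1 _ _ => 2
  | .prim2 _ _ _ => 3
  | .linVar _ => 1
  | .linZero _ => 1
  | .linTup _ _ => 3
  | .linAdd _ _ => 3
  | .scale _ _ => 3
  | .dup _ => 2
  | .drop e => 1 + e.size

def FDef.size (d : FDef) : ℕ :=
  1 + d.params.length + d.linParams.length + d.retTys.length + d.linRetTys.length + d.body.size

/-- Size of a program. -/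
def progSize (P : Program) : ℕ := (P.map FDef.size).sum

/-- Typing environments: finite sets of typed variables. -/
abbrev TEnv := Finset (Var × Ty)

/-- The linear type system of Linear A (Fig. 2):
`HasTy P Γ Δ e τs σs` means that in non-linear environment `Γ` and linear
environment `Δ`, the expression `e` returns non-linear results typed `τs`
and linear results typed `σs`.  Every non-linear variable must be used at
least once (unions of the `Γᵢ` need not be disjoint but leaves consume
exactly their own environment) and every linear variable exactly once
(unions of the `Δᵢ` are disjoint). -/
inductive HasTy : Program → TEnv → TEnv → Expr → List Ty → List Ty → Prop
  | ret {P : Program} (vs dvs : List (Var × Ty)) :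
      (vs.map Prod.fst).Nodup → (dvs.map Prod.fst).Nodup →
      HasTy P vs.toFinset dvs.toFinset
        (.ret (vs.map Prod.fst) (dvs.map Prod.fst)) (vs.map Prod.snd) (dvs.map Prod.snd)
  | lete {P : Program} {Γ₁ Γ₂ Δ₁ Δ₂ : TEnv} {bs dbs : List (Var × Ty)}
      {e₁ e₂ : Expr} {τs σs : List Ty} :
      HasTy P Γ₁ Δ₁ e₁ (bs.map Prod.snd) (dbs.map Prod.snd) →
      HasTy P (Γ₂ ∪ bs.toFinset) (Δ₂ ∪ dbs.toFinset) e₂ τs σs →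
      Disjoint Δ₁ Δ₂ → Disjoint Δ₂ dbs.toFinset →
      (dbs.map Prod.fst).Nodup →
      HasTy P (Γ₁ ∪ Γ₂) (Δ₁ ∪ Δ₂) (.lete bs dbs e₁ e₂) τs σs
  | unpack {P : Program} {Γ Δ : TEnv} {e : Expr} {τs σs : List Ty}
      (v : Var) (b₁ b₂ : Var × Ty) :
      HasTy P (Γ ∪ {b₁, b₂}) Δ e τs σs →
      HasTy P (Γ ∪ {(v, .pair b₁.2 b₂.2)}) Δ (.unpack b₁ b₂ v e) τs σs
  | linUnpack {P : Program} {Γ Δ : TEnv} {e : Expr} {τs σs : List Ty}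
      (dv : Var) (b₁ b₂ : Var × Ty) :
      HasTy P Γ (Δ ∪ {b₁, b₂}) e τs σs →
      Disjoint Δ ({b₁, b₂} : TEnv) → b₁.1 ≠ b₂.1 →
      HasTy P Γ (Δ ∪ {(dv, .pair b₁.2 b₂.2)}) (.linUnpack b₁ b₂ dv e) τs σs
  | app {P : Program} (f : ℕ) (d : FDef) (vs dvs : List Var) :
      P[f]? = some d →
      vs.length = d.params.length → dvs.length = d.linParams.length →
      dvs.Nodup →
      HasTy P (vs.zip (d.params.map Prod.snd)).toFinset
              (dvs.zip (d.linParams.map Prod.snd)).toFinset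
              (.app f vs dvs) d.retTys d.linRetTys
  | var {P : Program} (v : Var) (τ : Ty) : HasTy P {(v, τ)} ∅ (.var v) [τ] []
  | lit {P : Program} (r : ℝ) : HasTy P ∅ ∅ (.lit r) [.real] []
  | tup {P : Program} (v₁ v₂ : Var) (τ₁ τ₂ : Ty) :
      HasTy P {(v₁, τ₁), (v₂, τ₂)} ∅ (.tup v₁ v₂) [.pair τ₁ τ₂] []
  | prim1 {P : Program} (op : Prim1) (v : Var) :
      HasTy P {(v, .real)} ∅ (.prim1 op v) [.real] []
  | prim2 {P : Program} (op : Prim2) (v₁ v₂ : Var) :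
      HasTy P {(v₁, .real), (v₂, .real)} ∅ (.prim2 op v₁ v₂) [.real] []
  | linVar {P : Program} (dv : Var) (τ : Ty) : HasTy P ∅ {(dv, τ)} (.linVar dv) [] [τ]
  | linZero {P : Program} (τ : Ty) : HasTy P ∅ ∅ (.linZero τ) [] [τ]
  | linTup {P : Program} (dv₁ dv₂ : Var) (τ₁ τ₂ : Ty) :
      dv₁ ≠ dv₂ →
      HasTy P ∅ {(dv₁, τ₁), (dv₂, τ₂)} (.linTup dv₁ dv₂) [] [.pair τ₁ τ₂]
  | linAdd {P : Program} (dv₁ dv₂ : Var) (τ : Ty) :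
      dv₁ ≠ dv₂ →
      HasTy P ∅ {(dv₁, τ), (dv₂, τ)} (.linAdd dv₁ dv₂) [] [τ]
  | scale {P : Program} (v dv : Var) (τ : Ty) :
      HasTy P {(v, .real)} {(dv, τ)} (.scale v dv) [] [τ]
  | dup {P : Program} (dv : Var) (τ : Ty) :
      HasTy P ∅ {(dv, τ)} (.dup dv) [] [τ, τ]
  | drop {P : Program} {Γ Δ : TEnv} {e : Expr} {τs σs : List Ty} :
      HasTy P Γ Δ e τs σs → HasTy P Γ Δ (.drop e) [] []

/-- A program is well typed when the body of each definition is well typed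
using only earlier definitions (so there is no recursion). -/
def ProgramWT (P : Program) : Prop :=
  ∀ (i : ℕ) (d : FDef), P[i]? = some d →
    HasTy (P.take i) d.params.toFinset d.linParams.toFinset d.body d.retTys d.linRetTys

/-! ### Values and evaluation -/

inductive Val : Type
  | real (r : ℝ)
  | pair (a b : Val)

def Val.scalars : Val → ℕ
  | .real _ => 1
  | .pair a b => a.scalars + b.scalars

/-- The zero value of a type. -/
def zeroVal : Ty → Val
  | .real => .real 0
  | .pair a b => .pair (zeroVal a) (zeroVal b)

/-- Pointwise addition of values (of a common type). -/
def addVal : Val → Val → Val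
  | .real a, .real b => .real (a + b)
  | .pair a₁ a₂, .pair b₁ b₂ => .pair (addVal a₁ b₁) (addVal a₂ b₂)
  | v, _ => v

/-- Pointwise scaling of a value by a real scalar. -/
def smulVal (c : ℝ) : Val → Val
  | .real r => .real (c * r)
  | .pair a b => .pair (smulVal c a) (smulVal c b)

/-- Dot product of two values (of a common type), over all constituent
real scalars. -/
def dotVal : Val → Val → ℝ
  | .real a, .real b => a * b
  | .pair a₁ a₂, .pair b₁ b₂ => dotVal a₁ b₁ + dotVal a₂ b₂
  | _, _ => 0

/-- Flattening a value to its list of real scalars. -/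
def Val.flat : Val → List ℝ
  | .real r => [r]
  | .pair a b => a.flat ++ b.flat

/-- The list of real scalars of a list of values. -/
def flatList (vs : List Val) : List ℝ := (vs.map Val.flat).flatten

inductive ValHasTy : Val → Ty → Prop
  | real (r : ℝ) : ValHasTy (.real r) .real
  | pair {a b : Val} {τ₁ τ₂ : Ty} :
      ValHasTy a τ₁ → ValHasTy b τ₂ → ValHasTy (.pair a b) (.pair τ₁ τ₂)

/-- Value environments (valuations). -/
abbrev VEnv := Var → Val

/-- A valuation is well typed for an environment when it assigns each
variable a value of its declared type. -/
def EnvTyped (ρ : VEnv) (Γ : TEnv) : Prop := ∀ p ∈ Γ, ValHasTy (ρ p.1) p.2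

/-- Bind a list of variables to a list of values. -/
def updEnv (ρ : VEnv) (xs : List Var) (vs : List Val) : VEnv :=
  (xs.zip vs).foldl (fun ρ p => Function.update ρ p.1 p.2) ρ

noncomputable def evalPrim1 : Prim1 → ℝ → ℝ
  | .sin => Real.sin
  | .cos => Real.cos
  | .exp => Real.exp

def evalPrim2 : Prim2 → ℝ → ℝ → ℝ
  | .add => (· + ·)
  | .mul => (· * ·)

/-- Call-by-value big-step evaluation with cost:
`Eval P ρ dρ e os ls w` means that under the non-linear valuation `ρ` and
linear valuation `dρ`, `e` evaluates to non-linear results `os` and linear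
results `ls`, performing total work `w` (the paper's cost model: non-linear
primitives cost 1; linear addition and scaling cost 1 per real scalar in the
result; `drop` additionally costs 1 per real scalar dropped; everything else
is free). -/
inductive Eval : Program → VEnv → VEnv → Expr → List Val → List Val → ℕ → Prop
  | ret {P ρ dρ} (vs dvs : List Var) :
      Eval P ρ dρ (.ret vs dvs) (vs.map ρ) (dvs.map dρ) 0
  | lete {P ρ dρ bs dbs e₁ e₂ us dus os ls w₁ w₂} :
      Eval P ρ dρ e₁ us dus w₁ →
      Eval P (updEnv ρ (bs.map Prod.fst) us) (updEnv dρ (dbs.map Prod.fst) dus) e₂ os ls w₂ →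
      Eval P ρ dρ (.lete bs dbs e₁ e₂) os ls (w₁ + w₂)
  | unpack {P ρ dρ b₁ b₂ v e a b os ls w} :
      ρ v = .pair a b →
      Eval P (updEnv ρ [b₁.1, b₂.1] [a, b]) dρ e os ls w →
      Eval P ρ dρ (.unpack b₁ b₂ v e) os ls w
  | linUnpack {P ρ dρ b₁ b₂ dv e a b os ls w} :
      dρ dv = .pair a b →
      Eval P ρ (updEnv dρ [b₁.1, b₂.1] [a, b]) e os ls w →
      Eval P ρ dρ (.linUnpack b₁ b₂ dv e) os ls w
  | app {P ρ dρ f d vs dvs os ls w} :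
      P[f]? = some d →
      Eval P (updEnv (fun _ => Val.real 0) (d.params.map Prod.fst) (vs.map ρ))
             (updEnv (fun _ => Val.real 0) (d.linParams.map Prod.fst) (dvs.map dρ))
             d.body os ls w →
      Eval P ρ dρ (.app f vs dvs) os ls w
  | var {P ρ dρ} (v : Var) : Eval P ρ dρ (.var v) [ρ v] [] 0
  | lit {P ρ dρ} (r : ℝ) : Eval P ρ dρ (.lit r) [.real r] [] 0
  | tup {P ρ dρ} (v₁ v₂ : Var) : Eval P ρ dρ (.tup v₁ v₂) [.pair (ρ v₁) (ρ v₂)] [] 0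
  | prim1 {P ρ dρ op v r} :
      ρ v = .real r →
      Eval P ρ dρ (.prim1 op v) [.real (evalPrim1 op r)] [] 1
  | prim2 {P ρ dρ op v₁ v₂ r₁ r₂} :
      ρ v₁ = .real r₁ → ρ v₂ = .real r₂ →
      Eval P ρ dρ (.prim2 op v₁ v₂) [.real (evalPrim2 op r₁ r₂)] [] 1
  | linVar {P ρ dρ} (dv : Var) : Eval P ρ dρ (.linVar dv) [] [dρ dv] 0
  | linZero {P ρ dρ} (τ : Ty) : Eval P ρ dρ (.linZero τ) [] [zeroVal τ] 0
  | linTup {P ρ dρ} (d₁ d₂ : Var) :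
      Eval P ρ dρ (.linTup d₁ d₂) [] [.pair (dρ d₁) (dρ d₂)] 0
  | linAdd {P ρ dρ} (d₁ d₂ : Var) :
      Eval P ρ dρ (.linAdd d₁ d₂) [] [addVal (dρ d₁) (dρ d₂)]
        (addVal (dρ d₁) (dρ d₂)).scalars
  | scale {P ρ dρ dv c} (v : Var) :
      ρ v = .real c →
      Eval P ρ dρ (.scale v dv) [] [smulVal c (dρ dv)] (smulVal c (dρ dv)).scalars
  | dup {P ρ dρ} (dv : Var) : Eval P ρ dρ (.dup dv) [] [dρ dv, dρ dv] 0
  | drop {P ρ dρ e os ls w} :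
      Eval P ρ dρ e os ls w →
      Eval P ρ dρ (.drop e) [] []
        (w + (os.map Val.scalars).sum + (ls.map Val.scalars).sum)

/-! ### The purely non-linear fragment and Linear B -/

/-- The purely non-linear fragment of Linear A: expressions that mention no
linear variables and return no linear results. -/
inductive PureNonLin : Expr → Prop
  | ret (vs : List Var) : PureNonLin (.ret vs [])
  | lete {e₁ e₂ : Expr} (bs : List (Var × Ty)) :
      PureNonLin e₁ → PureNonLin e₂ → PureNonLin (.lete bs [] e₁ e₂)
  | unpack {e : Expr} (b₁ b₂ : Var × Ty) (v : Var) :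
      PureNonLin e → PureNonLin (.unpack b₁ b₂ v e)
  | app (f : ℕ) (vs : List Var) : PureNonLin (.app f vs [])
  | var (v : Var) : PureNonLin (.var v)
  | lit (r : ℝ) : PureNonLin (.lit r)
  | tup (v₁ v₂ : Var) : PureNonLin (.tup v₁ v₂)
  | prim1 (op : Prim1) (v : Var) : PureNonLin (.prim1 op v)
  | prim2 (op : Prim2) (v₁ v₂ : Var) : PureNonLin (.prim2 op v₁ v₂)
  | drop {e : Expr} : PureNonLin e → PureNonLin (.drop e)

/-- Linear expressions of Linear B: they return only linear results, and any
non-linear sub-expression is purely non-linear (in particular reads no linear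
variables, not even to drop them). -/
inductive LinBExpr : Expr → Prop
  | ret (dvs : List Var) : LinBExpr (.ret [] dvs)
  | letLin {le₁ le₂ : Expr} (dbs : List (Var × Ty)) :
      LinBExpr le₁ → LinBExpr le₂ → LinBExpr (.lete [] dbs le₁ le₂)
  | letNonLin {e₁ le₂ : Expr} (bs : List (Var × Ty)) :
      PureNonLin e₁ → LinBExpr le₂ → LinBExpr (.lete bs [] e₁ le₂)
  | unpack {le : Expr} (b₁ b₂ : Var × Ty) (v : Var) :
      LinBExpr le → LinBExpr (.unpack b₁ b₂ v le)
  | linUnpack {le : Expr} (b₁ b₂ : Var × Ty) (dv : Var) :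
      LinBExpr le → LinBExpr (.linUnpack b₁ b₂ dv le)
  | app (f : ℕ) (vs dvs : List Var) : LinBExpr (.app f vs dvs)
  | linVar (dv : Var) : LinBExpr (.linVar dv)
  | linZero (τ : Ty) : LinBExpr (.linZero τ)
  | linTup (d₁ d₂ : Var) : LinBExpr (.linTup d₁ d₂)
  | linAdd (d₁ d₂ : Var) : LinBExpr (.linAdd d₁ d₂)
  | scale (v dv : Var) : LinBExpr (.scale v dv)
  | dup (dv : Var) : LinBExpr (.dup dv)
  | drop {le : Expr} : LinBExpr le → LinBExpr (.drop le)

/-- A purely non-linear function definition. -/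
def FDefNonLin (d : FDef) : Prop :=
  d.linParams = [] ∧ d.linRetTys = [] ∧ PureNonLin d.body

/-- A linear function definition of Linear B. -/
def FDefLin (d : FDef) : Prop := d.retTys = [] ∧ LinBExpr d.body

/-- A Linear B program: every definition returns either only linear or only
non-linear results. -/
def LinearBProg (P : Program) : Prop := ∀ d ∈ P, FDefNonLin d ∨ FDefLin d

/-! ### Transposition (Fig. 3) -/

/-- The expression emitting a zero cotangent for each variable of `Δ`
(used to transpose `drop`). -/
def zerosFor (Δ : List (Var × Ty)) : Expr :=
  Δ.foldr (fun b acc => .lete [] [b] (.linZero b.2) acc) (.ret [] (Δ.map Prod.fst))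

/-- Transposition of the linear expressions of Linear B:
`Transp Δ Δc le te` means that with ordered linear environment `Δ` (listing
`le`'s free linear variables, in the order of `te`'s results) and ordered
cotangent environment `Δc` (naming one fresh cotangent variable per linear
result of `le`, with the same types), `le` transposes to `te`.  Non-linear
sub-expressions are left untouched; the `perm` rule implements the implicit
shuffles that re-order an environment together with the corresponding
results. -/
inductive Transp : List (Var × Ty) → List (Var × Ty) → Expr → Expr → Prop
  | ret (dvs ddvs : List (Var × Ty)) :
      dvs.map Prod.snd = ddvs.map Prod.snd →
      (dvs.map Prod.fst).Nodup → (ddvs.map Prod.fst).Nodup →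
      Transp dvs ddvs (.ret [] (dvs.map Prod.fst)) (.ret [] (ddvs.map Prod.fst))
  | letLin {le₁ le₂ te₁ te₂ : Expr} (Δ₁ Δ₂ Δc dbs ddbs ddws rs : List (Var × Ty)) :
      Transp (dbs ++ Δ₂) Δc le₂ te₂ →
      Transp Δ₁ ddbs le₁ te₁ →
      ddbs.map Prod.snd = dbs.map Prod.snd →
      ddws.map Prod.snd = Δ₂.map Prod.snd →
      rs.map Prod.snd = Δ₁.map Prod.snd →
      ((ddbs ++ ddws ++ rs).map Prod.fst).Nodup →
      Transp (Δ₁ ++ Δ₂) Δc (.lete [] dbs le₁ le₂)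
        (.lete [] (ddbs ++ ddws) te₂
          (.lete [] rs te₁ (.ret [] (rs.map Prod.fst ++ ddws.map Prod.fst))))
  | letNonLin {e₁ le₂ te₂ : Expr} (Δ Δc bs : List (Var × Ty)) :
      PureNonLin e₁ → bs ≠ [] →
      Transp Δ Δc le₂ te₂ →
      Transp Δ Δc (.lete bs [] e₁ le₂) (.lete bs [] e₁ te₂)
  | unpack {le te : Expr} (Δ Δc : List (Var × Ty)) (b₁ b₂ : Var × Ty) (v : Var) :
      Transp Δ Δc le te →
      Transp Δ Δc (.unpack b₁ b₂ v le) (.unpack b₁ b₂ v te)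
  | linUnpack {le te : Expr} (Δ₂ Δc ws : List (Var × Ty)) (b₁ b₂ : Var × Ty)
      (dv c₁ c₂ ddv : Var) :
      Transp (b₁ :: b₂ :: Δ₂) Δc le te →
      ws.map Prod.snd = Δ₂.map Prod.snd →
      (((c₁, b₁.2) :: (c₂, b₂.2) :: ws).map Prod.fst).Nodup →
      Transp ((dv, .pair b₁.2 b₂.2) :: Δ₂) Δc (.linUnpack b₁ b₂ dv le)
        (.lete [] ((c₁, b₁.2) :: (c₂, b₂.2) :: ws) te
          (.lete [] [(ddv, .pair b₁.2 b₂.2)] (.linTup c₁ c₂)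
            (.ret [] (ddv :: ws.map Prod.fst))))
  | app (f : ℕ) (vs : List Var) (Δ Δc : List (Var × Ty)) :
      Transp Δ Δc (.app f vs (Δ.map Prod.fst)) (.app f vs (Δc.map Prod.fst))
  | nonlin {e : Expr} : PureNonLin e → Transp [] [] e e
  | linVar (dv ddv : Var) (τ : Ty) :
      Transp [(dv, τ)] [(ddv, τ)] (.linVar dv) (.linVar ddv)
  | linZero (ddv : Var) (τ : Ty) :
      Transp [] [(ddv, τ)] (.linZero τ) (.drop (.linVar ddv))
  | linTup (d₁ d₂ ddv c₁ c₂ : Var) (τ₁ τ₂ : Ty) :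
      c₁ ≠ c₂ →
      Transp [(d₁, τ₁), (d₂, τ₂)] [(ddv, .pair τ₁ τ₂)] (.linTup d₁ d₂)
        (.linUnpack (c₁, τ₁) (c₂, τ₂) ddv (.ret [] [c₁, c₂]))
  | linAdd (d₁ d₂ ddv : Var) (τ : Ty) :
      Transp [(d₁, τ), (d₂, τ)] [(ddv, τ)] (.linAdd d₁ d₂) (.dup ddv)
  | scale (v dv ddv : Var) (τ : Ty) :
      Transp [(dv, τ)] [(ddv, τ)] (.scale v dv) (.scale v ddv)
  | dup (dv dd₁ dd₂ : Var) (τ : Ty) :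
      Transp [(dv, τ)] [(dd₁, τ), (dd₂, τ)] (.dup dv) (.linAdd dd₁ dd₂)
  | dropLin {le : Expr} (Δ : List (Var × Ty)) :
      LinBExpr le →
      Transp Δ [] (.drop le) (zerosFor Δ)
  | perm {le te : Expr} (Δ Δ' Δc rs rs' : List (Var × Ty)) :
      Transp Δ Δc le te →
      rs.map Prod.snd = Δ.map Prod.snd →
      (rs.zip Δ).Perm (rs'.zip Δ') →
      (rs.map Prod.fst).Nodup →
      Transp Δ' Δc le (.lete [] rs te (.ret [] (rs'.map Prod.fst)))

/-- Transposition of a linear function definition: the transposed function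
takes the same non-linear parameters, takes cotangents of the original linear
results, and returns cotangents of the original linear parameters. -/
def TranspDef (d d' : FDef) : Prop :=
  d.retTys = [] ∧
  ∃ ddvs : List (Var × Ty),
    ddvs.map Prod.snd = d.linRetTys ∧ (ddvs.map Prod.fst).Nodup ∧
    Transp d.linParams ddvs d.body d'.body ∧
    d'.params = d.params ∧ d'.linParams = ddvs ∧
    d'.retTys = [] ∧ d'.linRetTys = d.linParams.map Prod.snd

/-- Transposition of a Linear B program: each linear definition is
transposed (in place, so call sites keep their function indices) and each
non-linear definition is kept as is. -/
def TranspProg (P P' : Program) : Prop :=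
  List.Forall₂ (fun d d' => TranspDef d d' ∨ (FDefNonLin d ∧ d' = d)) P P'

/-! ### Unzipping (Fig. 4) -/

/-- A frame of a context `E` of non-linear bindings. -/
inductive Frame : Type
  | bindF (bs : List (Var × Ty)) (e : Expr)     -- let (bs;) = e in ⟨hole⟩
  | unpackF (b₁ b₂ : Var × Ty) (v : Var)        -- let ⊗(b₁,b₂) = v in ⟨hole⟩

/-- A context is a list of non-linear binding frames with a single hole at
the end. -/
abbrev Ctx := List Frame

/-- Plugging an expression into the hole of a context. -/
def plug : Ctx → Expr → Expr
  | [], e => e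
  | .bindF bs e₁ :: E, e => .lete bs [] e₁ (plug E e)
  | .unpackF b₁ b₂ v :: E, e => .unpack b₁ b₂ v (plug E e)

/-- The (typed) variables bound by a context. -/
def ctxBinds : Ctx → TEnv
  | [] => ∅
  | .bindF bs _ :: E => bs.toFinset ∪ ctxBinds E
  | .unpackF b₁ b₂ _ :: E => {b₁, b₂} ∪ ctxBinds E

/-- Frame sizes, so that unzipping is size-preserving at the program level. -/
def Frame.size : Frame → ℕ
  | .bindF bs e => 1 + bs.length + e.size
  | .unpackF _ _ _ => 4

/-- The free non-linear variables of an expression. -/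
def Expr.freeNLVars : Expr → Finset Var
  | .ret vs _ => vs.toFinset
  | .lete bs _ e₁ e₂ => e₁.freeNLVars ∪ (e₂.freeNLVars \ (bs.map Prod.fst).toFinset)
  | .unpack b₁ b₂ v e => {v} ∪ (e.freeNLVars \ {b₁.1, b₂.1})
  | .linUnpack _ _ _ e => e.freeNLVars
  | .app _ vs _ => vs.toFinset
  | .var v => {v}
  | .lit _ => ∅
  | .tup v₁ v₂ => {v₁, v₂}
  | .prim1 _ v => {v}
  | .prim2 _ v₁ v₂ => {v₁, v₂}
  | .linVar _ => ∅
  | .linZero _ => ∅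
  | .linTup _ _ => ∅
  | .linAdd _ _ => ∅
  | .scale v _ => {v}
  | .dup _ => ∅
  | .drop e => e.freeNLVars

/-- Non-linear leaves, handled by rule `ULeaf`. -/
def isNLLeaf : Expr → Prop
  | .var _ => True
  | .lit _ => True
  | .tup _ _ => True
  | .prim1 _ _ => True
  | .prim2 _ _ _ => True
  | _ => False

/-- Linear leaves, handled by rule `ULinLeaf`. -/
def isLinLeaf : Expr → Prop
  | .linVar _ => True
  | .linZero _ => True
  | .linTup _ _ => True
  | .linAdd _ _ => True
  | .scale _ _ => True
  | .dup _ => True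
  | _ => False

/-- Unzipping `𝒰` of Linear A expressions into Linear B (Fig. 4):
`Unzip sig e E e' le'` splits `e` into a context `E` of shared non-linear
bindings, a non-linear result expression `e'` and a linear residual
expression `le'`.  In the unzipped program the definition with index `f`
becomes the pair of definitions with indices `2f` (non-linear part, which
additionally returns the tape) and `2f+1` (linear part, which consumes the
tape); `sig f = some (τks, τms)` records the original non-linear result
types `τks` of `f` and the types `τms` of its tape. -/
inductive Unzip (sig : ℕ → Option (List Ty × List Ty)) :
    Expr → Ctx → Expr → Expr → Prop
  | ret (vs dvs : List Var) :
      Unzip sig (.ret vs dvs) [] (.ret vs []) (.ret [] dvs)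
  | lete {e₁ e₂ e₁' e₂' le₁' le₂' : Expr} {E₁ E₂ : Ctx}
      (bs dbs : List (Var × Ty)) :
      Unzip sig e₁ E₁ e₁' le₁' →
      Unzip sig e₂ E₂ e₂' le₂' →
      Unzip sig (.lete bs dbs e₁ e₂) (E₁ ++ .bindF bs e₁' :: E₂) e₂'
        (.lete [] dbs le₁' le₂')
  | unpack {e e' le' : Expr} {E : Ctx} (b₁ b₂ : Var × Ty) (v : Var) :
      Unzip sig e E e' le' →
      Unzip sig (.unpack b₁ b₂ v e) (.unpackF b₁ b₂ v :: E) e' le'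
  | linUnpack {e e' le' : Expr} {E : Ctx} (b₁ b₂ : Var × Ty) (dv : Var) :
      Unzip sig e E e' le' →
      Unzip sig (.linUnpack b₁ b₂ dv e) E e' (.linUnpack b₁ b₂ dv le')
  | app (f : ℕ) (vs dvs : List Var) (τks τms : List Ty) (ws xs : List (Var × Ty)) :
      sig f = some (τks, τms) →
      ws.map Prod.snd = τks → xs.map Prod.snd = τms →
      ((ws ++ xs).map Prod.fst).Nodup →
      Unzip sig (.app f vs dvs)
        [.bindF (ws ++ xs) (.app (2 * f) vs [])]
        (.ret (ws.map Prod.fst) [])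
        (.app (2 * f + 1) (xs.map Prod.fst) dvs)
  | nlLeaf {e : Expr} : isNLLeaf e → Unzip sig e [] e (.ret [] [])
  | linLeaf {le : Expr} : isLinLeaf le → Unzip sig le [] (.ret [] []) le
  | drop {e e' le' : Expr} {E : Ctx} :
      Unzip sig e E e' le' →
      Unzip sig (.drop e) E (.drop e') (.drop le')

/-- `IsTape Γ E le' xs`: the tape `xs` consists exactly of the non-linear
variables read by the residual `le'`, each bound (with its type) by `Γ` or by
the context `E`. -/
def IsTape (Γ : TEnv) (E : Ctx) (le' : Expr) (xs : List (Var × Ty)) : Prop :=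
  (xs.map Prod.fst).Nodup ∧
  (xs.map Prod.fst).toFinset = le'.freeNLVars ∧
  ∀ b ∈ xs, b ∈ Γ ∪ ctxBinds E

/-- The non-linear partial `E(e', xs)`: plug `let (ws;) = e' in (ws, xs;)`
into the hole of `E`, so that it returns the non-linear results of the
original expression together with the tape. -/
def nlPartial (E : Ctx) (e' : Expr) (ws xs : List (Var × Ty)) : Expr :=
  plug E (.lete ws [] e' (.ret (ws.map Prod.fst ++ xs.map Prod.fst) []))

/-- The reconstruction `E(e', xs; le')`:
`let (ws, xs;) = E(e', xs) in let (; dws) = le' in (ws; dws)`. -/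
def recon (E : Ctx) (e' le' : Expr) (ws xs dws : List (Var × Ty)) : Expr :=
  .lete (ws ++ xs) [] (nlPartial E e' ws xs)
    (.lete [] dws le' (.ret (ws.map Prod.fst) (dws.map Prod.fst)))

/-- Unzipping a function definition into its non-linear part `dN` (which
additionally returns the tape) and its linear part `dL` (which consumes the
tape). -/
def UnzipDef (sig : ℕ → Option (List Ty × List Ty)) (d dN dL : FDef) : Prop :=
  ∃ (E : Ctx) (e' le' : Expr) (xs ws : List (Var × Ty)),
    Unzip sig d.body E e' le' ∧
    IsTape d.params.toFinset E le' xs ∧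
    ws.map Prod.snd = d.retTys ∧ (ws.map Prod.fst).Nodup ∧
    dN = ⟨d.params, [], d.retTys ++ xs.map Prod.snd, [], nlPartial E e' ws xs⟩ ∧
    dL = ⟨xs, d.linParams, [], d.linRetTys, le'⟩

/-- Unzipping a program: definition `f` becomes the pair `2f` (non-linear
part) and `2f+1` (linear part), and `sig` records the signatures. -/
def UnzipProg (sig : ℕ → Option (List Ty × List Ty)) (P P' : Program) : Prop :=
  P'.length = 2 * P.length ∧
  ∀ (f : ℕ) (d : FDef), P[f]? = some d →
    ∃ dN dL : FDef, P'[2 * f]? = some dN ∧ P'[2 * f + 1]? = some dL ∧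
      UnzipDef sig d dN dL ∧
      sig f = some (d.retTys, dL.params.map Prod.snd)

/-! ### Forward-mode differentiation (Fig. 5) -/

/-- Forward-mode automatic differentiation `𝒥` (Fig. 5):
`Jvp m e e'` means that under the primal-to-tangent renaming `m` (an
association list pairing each occurrence of a free primal variable with the
linear variable carrying its tangent), the purely non-linear expression `e`
differentiates to `e'`, which returns the primal results together with their
tangents.  The rule `dupVar` inserts the explicit `dup`s for primal
variables whose tangent is used more than once, and `perm` permutes the
association list. -/
inductive Jvp : List (Var × Var) → Expr → Expr → Prop
  | ret (vs dvs : List Var) :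
      vs.length = dvs.length →
      Jvp (vs.zip dvs) (.ret vs []) (.ret vs dvs)
  | lete {e₁ e₂ e₁' e₂' : Expr} (m₁ m₂ : List (Var × Var)) (bs dbs : List (Var × Ty)) :
      Jvp m₁ e₁ e₁' →
      Jvp ((bs.map Prod.fst).zip (dbs.map Prod.fst) ++ m₂) e₂ e₂' →
      dbs.map Prod.snd = bs.map Prod.snd →
      Jvp (m₁ ++ m₂) (.lete bs [] e₁ e₂) (.lete bs dbs e₁' e₂')
  | unpack {e e' : Expr} (b₁ b₂ : Var × Ty) (v dv c₁ c₂ : Var) (m : List (Var × Var)) :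
      Jvp ((b₁.1, c₁) :: (b₂.1, c₂) :: m) e e' →
      Jvp ((v, dv) :: m) (.unpack b₁ b₂ v e)
        (.unpack b₁ b₂ v (.linUnpack (c₁, b₁.2) (c₂, b₂.2) dv e'))
  | app (f : ℕ) (vs dvs : List Var) :
      vs.length = dvs.length →
      Jvp (vs.zip dvs) (.app f vs []) (.app f vs dvs)
  | var (v dv : Var) : Jvp [(v, dv)] (.var v) (.ret [v] [dv])
  | lit (r : ℝ) (p z : Var) :
      Jvp [] (.lit r)
        (.lete [(p, .real)] [] (.lit r)
          (.lete [] [(z, .real)] (.linZero .real) (.ret [p] [z])))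
  | tup (v₁ v₂ d₁ d₂ p q : Var) (τ₁ τ₂ : Ty) :
      Jvp [(v₁, d₁), (v₂, d₂)] (.tup v₁ v₂)
        (.lete [(p, .pair τ₁ τ₂)] [] (.tup v₁ v₂)
          (.lete [] [(q, .pair τ₁ τ₂)] (.linTup d₁ d₂) (.ret [p] [q])))
  | primSin (v dv p c t : Var) :
      Jvp [(v, dv)] (.prim1 .sin v)
        (.lete [(p, .real)] [] (.prim1 .sin v)
          (.lete [(c, .real)] [] (.prim1 .cos v)
            (.lete [] [(t, .real)] (.scale c dv) (.ret [p] [t]))))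
  | primCos (v dv p s n ns t : Var) :
      Jvp [(v, dv)] (.prim1 .cos v)
        (.lete [(p, .real)] [] (.prim1 .cos v)
          (.lete [(s, .real)] [] (.prim1 .sin v)
            (.lete [(n, .real)] [] (.lit (-1))
              (.lete [(ns, .real)] [] (.prim2 .mul n s)
                (.lete [] [(t, .real)] (.scale ns dv) (.ret [p] [t]))))))
  | primExp (v dv p t : Var) :
      Jvp [(v, dv)] (.prim1 .exp v)
        (.lete [(p, .real)] [] (.prim1 .exp v)
          (.lete [] [(t, .real)] (.scale p dv) (.ret [p] [t])))
  | primAdd (v₁ v₂ d₁ d₂ p t : Var) :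
      Jvp [(v₁, d₁), (v₂, d₂)] (.prim2 .add v₁ v₂)
        (.lete [(p, .real)] [] (.prim2 .add v₁ v₂)
          (.lete [] [(t, .real)] (.linAdd d₁ d₂) (.ret [p] [t])))
  | primMul (v₁ v₂ d₁ d₂ p a b t : Var) :
      Jvp [(v₁, d₁), (v₂, d₂)] (.prim2 .mul v₁ v₂)
        (.lete [(p, .real)] [] (.prim2 .mul v₁ v₂)
          (.lete [] [(a, .real)] (.scale v₁ d₂)
            (.lete [] [(b, .real)] (.scale v₂ d₁)
              (.lete [] [(t, .real)] (.linAdd a b) (.ret [p] [t])))))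
  | drop {e e' : Expr} (m : List (Var × Var)) :
      Jvp m e e' → Jvp m (.drop e) (.drop e')
  | dupVar {e e' : Expr} (m : List (Var × Var)) (x dx u w : Var) (τ : Ty) :
      Jvp ((x, u) :: (x, w) :: m) e e' →
      Jvp ((x, dx) :: m) e (.lete [] [(u, τ), (w, τ)] (.dup dx) e')
  | perm {e e' : Expr} (m m' : List (Var × Var)) :
      m.Perm m' → Jvp m e e' → Jvp m' e e'

/-- Forward-mode differentiation of a (purely non-linear) function
definition: the differentiated function takes tangents for all its
parameters and returns primal results paired with their tangents. -/
def JDef (d d' : FDef) : Prop :=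
  d.linParams = [] ∧ d.linRetTys = [] ∧
  ∃ dxs : List (Var × Ty),
    dxs.map Prod.snd = d.params.map Prod.snd ∧ (dxs.map Prod.fst).Nodup ∧
    Jvp ((d.params.map Prod.fst).zip (dxs.map Prod.fst)) d.body d'.body ∧
    d'.params = d.params ∧ d'.linParams = dxs ∧
    d'.retTys = d.retTys ∧ d'.linRetTys = d.retTys

/-- Forward-mode differentiation of a program, definition by definition. -/
def JProg (P P' : Program) : Prop := List.Forall₂ JDef P P'

/-- The vector of `Fin n → ℝ` determined by a list of reals. -/
def vecOf (l : List ℝ) (n : ℕ) : Fin n → ℝ := fun i => l.getD i 0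

/-!
Unzipping is syntax directed, so on a well-typed expression it can only get stuck at a call
whose callee has no signature (result and tape types) yet. Programs are not recursive, so the
signatures can be produced definition by definition: a body typed against earlier definitions
unzips, and its tape is read off the free non-linear variables of the linear residual, which
the typing derivation guarantees to be bound, with a type, by the parameters or by the context.
-/

theorem ctxBinds_append (E₁ E₂ : Ctx) :
    ctxBinds (E₁ ++ E₂) = ctxBinds E₁ ∪ ctxBinds E₂ := by
  induction E₁ with
  | nil => simp [ctxBinds]
  | cons F E ih => cases F <;> simp [ctxBinds, ih, Finset.union_assoc]

theorem exists_binders_nodup (τs : List Ty) :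
    ∃ bs : List (Var × Ty), bs.map Prod.snd = τs ∧ (bs.map Prod.fst).Nodup :=
  ⟨(List.range τs.length).zip τs, List.map_snd_zip (by simp),
    by rw [List.map_fst_zip (by simp)]; exact List.nodup_range⟩

section Unzip

variable {sig sig₂ : ℕ → Option (List Ty × List Ty)}

theorem Unzip.mono (h : ∀ f p, sig f = some p → sig₂ f = some p)
    {e : Expr} {E : Ctx} {e' le' : Expr} (hu : Unzip sig e E e' le') :
    Unzip sig₂ e E e' le' := by
  induction hu with
  | ret vs dvs => exact .ret vs dvs
  | lete bs dbs _ _ ih₁ ih₂ => exact .lete bs dbs ih₁ ih₂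
  | unpack b₁ b₂ v _ ih => exact .unpack b₁ b₂ v ih
  | linUnpack b₁ b₂ dv _ ih => exact .linUnpack b₁ b₂ dv ih
  | app f vs dvs τks τms ws xs hs h₁ h₂ h₃ => exact .app f vs dvs τks τms ws xs (h _ _ hs) h₁ h₂ h₃
  | nlLeaf h' => exact .nlLeaf h'
  | linLeaf h' => exact .linLeaf h'
  | drop _ ih => exact .drop ih

theorem UnzipDef.mono (h : ∀ f p, sig f = some p → sig₂ f = some p) {d dN dL : FDef}
    (hd : UnzipDef sig d dN dL) : UnzipDef sig₂ d dN dL := by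
  obtain ⟨E, e', le', xs, ws, hu, rest⟩ := hd
  exact ⟨E, e', le', xs, ws, hu.mono h, rest⟩

theorem UnzipProg.mono (h : ∀ f p, sig f = some p → sig₂ f = some p) {Q P' : Program}
    (hQ : UnzipProg sig Q P') : UnzipProg sig₂ Q P' := by
  refine ⟨hQ.1, fun f d hf => ?_⟩
  obtain ⟨dN, dL, hN, hL, hd, hs⟩ := hQ.2 f d hf
  exact ⟨dN, dL, hN, hL, hd.mono h, h _ _ hs⟩

theorem UnzipProg.exists_sig_eq_some {Q P' : Program} (hQ : UnzipProg sig Q P')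
    {g : ℕ} (hg : g < Q.length) : ∃ p, sig g = some p := by
  obtain ⟨_, _, _, _, _, hs⟩ := hQ.2 g Q[g] (List.getElem?_eq_getElem hg)
  exact ⟨_, hs⟩

theorem UnzipProg.snoc {Q P' : Program} {d dN dL : FDef} (hQ : UnzipProg sig Q P')
    (hd : UnzipDef sig d dN dL) (hs : sig Q.length = some (d.retTys, dL.params.map Prod.snd)) :
    UnzipProg sig (Q ++ [d]) (P' ++ [dN, dL]) := by
  obtain ⟨hlen, hQ⟩ := hQ
  refine ⟨by simp only [List.length_append, List.length_cons, List.length_nil, hlen]; omega, fun f df hf => ?_⟩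
  rcases lt_or_ge f Q.length with hfQ | hfQ
  · rw [List.getElem?_append_left hfQ] at hf
    obtain ⟨dN', dL', hN, hL, hd', hs'⟩ := hQ f df hf
    exact ⟨dN', dL', by rwa [List.getElem?_append_left (by omega)],
      by rwa [List.getElem?_append_left (by omega)], hd', hs'⟩
  · obtain rfl : f = Q.length := by
      have := (List.getElem?_eq_some_iff.mp hf).1
      rw [List.length_append, List.length_singleton] at this
      omega
    obtain rfl : d = df := by simpa using hf
    refine ⟨dN, dL, ?_, ?_, hd, hs⟩ <;>
      rw [List.getElem?_append_right (by omega)] <;> simp [hlen]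

theorem exists_unzip {Q : Program} {Γ Δ : TEnv} {e : Expr} {τs σs : List Ty}
    (ht : HasTy Q Γ Δ e τs σs) (hs : ∀ g < Q.length, ∃ p, sig g = some p) :
    ∃ (E : Ctx) (e' le' : Expr), Unzip sig e E e' le' := by
  induction ht with
  | ret => exact ⟨_, _, _, .ret _ _⟩
  | lete _ _ _ _ _ ih₁ ih₂ =>
    obtain ⟨_, _, _, u₁⟩ := ih₁
    obtain ⟨_, _, _, u₂⟩ := ih₂
    exact ⟨_, _, _, .lete _ _ u₁ u₂⟩
  | unpack v b₁ b₂ _ ih =>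
    obtain ⟨_, _, _, u⟩ := ih
    exact ⟨_, _, _, .unpack b₁ b₂ v u⟩
  | linUnpack dv b₁ b₂ _ _ _ ih =>
    obtain ⟨_, _, _, u⟩ := ih
    exact ⟨_, _, _, .linUnpack b₁ b₂ dv u⟩
  | app f d vs dvs hf =>
    obtain ⟨⟨τks, τms⟩, hp⟩ := hs f (List.getElem?_eq_some_iff.mp hf).1
    obtain ⟨bs, hbs, hnodup⟩ := exists_binders_nodup (τks ++ τms)
    refine ⟨_, _, _, .app f vs dvs τks τms (bs.take τks.length) (bs.drop τks.length) hp
      ?_ ?_ (by rwa [List.take_append_drop])⟩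
    · rw [List.map_take, hbs, List.take_left]
    · rw [List.map_drop, hbs, List.drop_left]
  | var | lit | tup | prim1 | prim2 => exact ⟨_, _, _, .nlLeaf trivial⟩
  | linVar | linZero | linTup | linAdd | scale | dup => exact ⟨_, _, _, .linLeaf trivial⟩
  | drop _ ih =>
    obtain ⟨_, _, _, u⟩ := ih
    exact ⟨_, _, _, .drop u⟩

theorem Unzip.freeNLVars_residual_subset {e : Expr} {E : Ctx} {e' le' : Expr}
    (hu : Unzip sig e E e' le') {Q : Program} {Γ Δ : TEnv} {τs σs : List Ty}
    (ht : HasTy Q Γ Δ e τs σs) : le'.freeNLVars ⊆ (Γ ∪ ctxBinds E).image Prod.fst := by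
  induction hu generalizing Γ Δ τs σs with
  | ret | nlLeaf => simp [Expr.freeNLVars]
  | lete bs dbs _ _ ih₁ ih₂ =>
    cases ht with
    | lete h₁ h₂ =>
      simp only [Expr.freeNLVars, List.map_nil, List.toFinset_nil, Finset.sdiff_empty]
      refine Finset.union_subset ((ih₁ h₁).trans (Finset.image_subset_image ?_))
        ((ih₂ h₂).trans (Finset.image_subset_image ?_)) <;>
      · intro b
        simp only [ctxBinds_append, ctxBinds, Finset.mem_union]
        tauto
  | unpack b₁ b₂ v _ ih =>
    cases ht with
    | unpack _ _ _ h =>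
      refine (ih h).trans (Finset.image_subset_image ?_)
      intro b
      simp only [ctxBinds, Finset.mem_union]
      tauto
  | linUnpack _ _ _ _ ih =>
    cases ht with
    | linUnpack _ _ _ h => exact ih h
  | app =>
    intro v hv
    obtain ⟨b, hb, rfl⟩ := List.mem_map.mp (List.mem_toFinset.mp hv)
    exact Finset.mem_image_of_mem _ (by simp [ctxBinds, hb])
  | linLeaf hleaf => cases ht <;> simp_all [isLinLeaf, Expr.freeNLVars]
  | drop _ ih =>
    cases ht with
    | drop h => exact ih h

theorem exists_nodup_keys_of_subset_image {α β : Type*} [DecidableEq α]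
    {S : Finset (α × β)} {s : Finset α} (hs : s ⊆ S.image Prod.fst) :
    ∃ xs : List (α × β), (xs.map Prod.fst).Nodup ∧ (xs.map Prod.fst).toFinset = s ∧
      ∀ b ∈ xs, b ∈ S := by
  induction s using Finset.induction_on with
  | empty => exact ⟨[], by simp⟩
  | insert a s ha ih =>
    obtain ⟨xs, hnodup, hkeys, hS⟩ := ih ((Finset.subset_insert a s).trans hs)
    obtain ⟨b, hb, rfl⟩ := Finset.mem_image.mp (hs (Finset.mem_insert_self a s))
    refine ⟨b :: xs, ?_, by simp [hkeys], List.forall_mem_cons.mpr ⟨hb, hS⟩⟩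
    exact List.nodup_cons.mpr ⟨fun h => ha (hkeys ▸ List.mem_toFinset.mpr h), hnodup⟩

theorem exists_unzipDef {Q : Program} {d : FDef}
    (ht : HasTy Q d.params.toFinset d.linParams.toFinset d.body d.retTys d.linRetTys)
    (hs : ∀ g < Q.length, ∃ p, sig g = some p) :
    ∃ dN dL : FDef, UnzipDef sig d dN dL := by
  obtain ⟨E, e', le', hu⟩ := exists_unzip ht hs
  obtain ⟨xs, htape⟩ := exists_nodup_keys_of_subset_image (hu.freeNLVars_residual_subset ht)
  obtain ⟨ws, hws, hnodup⟩ := exists_binders_nodup d.retTys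
  exact ⟨_, _, ⟨E, e', le', xs, ws, hu, htape, hws, hnodup, rfl, rfl⟩⟩

end Unzip

theorem exists_unzipProg_take {P : Program} (hP : ProgramWT P) {n : ℕ} (hn : n ≤ P.length) :
    ∃ (sig : ℕ → Option (List Ty × List Ty)) (P' : Program),
      (∀ g, n ≤ g → sig g = none) ∧ UnzipProg sig (P.take n) P' := by
  induction n with
  | zero => exact ⟨fun _ => none, [], fun _ _ => rfl, by simp [UnzipProg]⟩
  | succ n ih =>
    obtain ⟨sig, P', hnone, hprog⟩ := ih (by omega)
    have hlen : (P.take n).length = n := List.length_take_of_le (by omega)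
    obtain ⟨dN, dL, hd⟩ := exists_unzipDef (hP n P[n] (List.getElem?_eq_getElem hn))
      (fun g hg => hprog.exists_sig_eq_some hg)
    set sig' := Function.update sig n (some (P[n].retTys, dL.params.map Prod.snd)) with hsig'
    have hext : ∀ f p, sig f = some p → sig' f = some p := fun f p hf => by
      rwa [hsig', Function.update_of_ne (by rintro rfl; simp [hnone f le_rfl] at hf)]
    refine ⟨sig', P' ++ [dN, dL], fun g hg => ?_, ?_⟩
    · rw [hsig', Function.update_of_ne (by omega)]
      exact hnone g (by omega)
    · rw [List.take_succ_eq_append_getElem hn]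
      exact (hprog.mono hext).snoc (hd.mono hext) (by simp [sig', hlen])

/-- **Unzipping is total** (Theorem 4.1, Claim 1).  For every Linear A
expression `e` well typed in `Γ; Δ` (in a well-typed program), the unzipping
transformation produces a result: there are a signature `sig` (realized by
an unzipping of the whole program), a context `E` of non-linear let
bindings, a non-linear expression `e'`, and a linear residual `le'` with
`(E; e'; le') = 𝒰(e)`. -/
theorem unzip_total
    {P : Program} {Γ Δ : TEnv} {e : Expr} {τs σs : List Ty}
    (hP : ProgramWT P) (ht : HasTy P Γ Δ e τs σs) :
    ∃ (sig : ℕ → Option (List Ty × List Ty)) (P' : Program)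
      (E : Ctx) (e' le' : Expr),
      UnzipProg sig P P' ∧ Unzip sig e E e' le' := by
  obtain ⟨sig, P', -, hprog⟩ := exists_unzipProg_take hP le_rfl
  rw [List.take_length] at hprog
  obtain ⟨E, e', le', hu⟩ := exists_unzip ht (fun g hg => hprog.exists_sig_eq_some hg)
  exact ⟨sig, P', E, e', le', hprog, hu⟩

end LinearA
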